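/- Every position sequence induced by a paging request sequence satisfies the repeat property: for any two times $t_1 < t_2$ with $h_{t_1} = h_{t_2}$, every element of $\{2, 3, \ldots, h_{t_1} - 1\}$ occurs in $\{h_{t_1+1}, \ldots, h_{t_2-1}\}$. -/

import Mathlib

/-- Time of the next request to page `p` strictly after time `t` (`⊤` if never requested again). -/
noncomputable def nextReq (r : ℕ → ℕ) (t p : ℕ) : ℕ∞ :=
  sInf ((fun s : ℕ => (s : ℕ∞)) '' {s : ℕ | t < s ∧ r s = p})

/-- Tie-breaking key: pages compared by next-request time, ties broken by page id. -/
noncomputable def fifKey (r : ℕ → ℕ) (t p : ℕ) : ℕ∞ ×ₗ ℕ :=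
  toLex ((nextReq r t p, p) : ℕ∞ × ℕ)

/-- The page evicted by Farthest-in-Future from cache `C` at time `t`:
the page of `C` whose next request after time `t` is farthest in the future
(ties broken by the fixed rule). -/
noncomputable def victim (r : ℕ → ℕ) (t : ℕ) (C : Finset ℕ) : ℕ :=
  if h : C.Nonempty then
    Classical.choose (C.exists_max_image (fifKey r t) h)
  else 0

/-- One step of Belady's FiF algorithm: serve the request `r (t+1)` from cache `C`. -/
noncomputable def fifStep (r : ℕ → ℕ) (t : ℕ) (C : Finset ℕ) : Finset ℕ :=
  if r (t+1) ∈ C then C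
  else if C = ∅ then C
  else insert (r (t+1)) (C.erase (victim r (t+1) C))

/-- The cache of FiF at time `t`, starting from initial configuration `C0` and
serving requests `r 1, r 2, …`. -/
noncomputable def fifCache (r : ℕ → ℕ) (C0 : Finset ℕ) : ℕ → Finset ℕ
  | 0 => C0
  | t+1 => fifStep r t (fifCache r C0 t)

/-- The position of page `p` in the Belady ranking at time `t`: the least cache size `m`
such that `p` is in the cache of `FiF^m` at time `t`. -/
noncomputable def beladyPos (r : ℕ → ℕ) (C0 : ℕ → Finset ℕ) (t p : ℕ) : ℕ :=
  sInf {m | p ∈ fifCache r (C0 m) t}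

section Aux
variable (r : ℕ → ℕ)

lemma fifKey_inj {t p q : ℕ} (h : fifKey r t p = fifKey r t q) : p = q := by
  have h2 := congrArg (fun x => (ofLex x).2) h
  simpa [fifKey] using h2

lemma nextReq_le {s T p : ℕ} (hT : s < T) (hr : r T = p) : nextReq r s p ≤ (T : ℕ∞) :=
  sInf_le ⟨T, ⟨hT, hr⟩, rfl⟩

lemma exists_req_of_nextReq_le {s T p : ℕ} (h : nextReq r s p ≤ (T : ℕ∞)) :
    ∃ T', s < T' ∧ T' ≤ T ∧ r T' = p := by
  by_contra hc
  push_neg at hc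
  have hlb : (T : ℕ∞) + 1 ≤ nextReq r s p := by
    apply le_sInf
    rintro b ⟨T', ⟨h1, h2⟩, rfl⟩
    have h3 : ¬ (T' ≤ T) := fun hle => hc T' h1 hle h2
    have h4 : T + 1 ≤ T' := by omega
    exact_mod_cast Nat.cast_le.mpr h4
  have h5 : (T : ℕ∞) + 1 ≤ (T : ℕ∞) := le_trans hlb h
  have h6 : T + 1 ≤ T := by exact_mod_cast h5
  omega

lemma nextReq_shift {s p : ℕ} (h : r (s+1) ≠ p) : nextReq r (s+1) p = nextReq r s p := by
  unfold nextReq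
  have hset : {T : ℕ | s + 1 < T ∧ r T = p} = {T : ℕ | s < T ∧ r T = p} := by
    ext T
    simp only [Set.mem_setOf_eq]
    constructor
    · rintro ⟨h1, h2⟩; exact ⟨by omega, h2⟩
    · rintro ⟨h1, h2⟩
      refine ⟨?_, h2⟩
      rcases Nat.lt_or_ge (s+1) T with h' | h'
      · exact h'
      · exfalso; have hT : T = s + 1 := by omega
        exact h (hT ▸ h2)
  rw [hset]

lemma fifKey_shift {s p : ℕ} (h : r (s+1) ≠ p) : fifKey r (s+1) p = fifKey r s p := by
  unfold fifKey
  rw [nextReq_shift r h]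

lemma victim_mem {t : ℕ} {C : Finset ℕ} (h : C.Nonempty) : victim r t C ∈ C := by
  rw [victim, dif_pos h]
  exact (Classical.choose_spec (C.exists_max_image (fifKey r t) h)).1

lemma victim_max {t : ℕ} {C : Finset ℕ} (h : C.Nonempty) {p : ℕ} (hp : p ∈ C) :
    fifKey r t p ≤ fifKey r t (victim r t C) := by
  rw [victim, dif_pos h]
  exact (Classical.choose_spec (C.exists_max_image (fifKey r t) h)).2 p hp

lemma victim_eq {t : ℕ} {A B : Finset ℕ} (hA : A.Nonempty) (hAB : A ⊆ B)
    (hmem : victim r t B ∈ A) : victim r t A = victim r t B := by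
  have hB : B.Nonempty := hA.mono hAB
  have h1 : fifKey r t (victim r t B) ≤ fifKey r t (victim r t A) := victim_max r hA hmem
  have h2 : fifKey r t (victim r t A) ≤ fifKey r t (victim r t B) :=
    victim_max r hB (hAB (victim_mem r hA))
  exact fifKey_inj r (le_antisymm h2 h1)

lemma fifStep_of_mem {t : ℕ} {C : Finset ℕ} (h : r (t+1) ∈ C) : fifStep r t C = C :=
  if_pos h

lemma fifStep_of_not_mem {t : ℕ} {C : Finset ℕ} (h : r (t+1) ∉ C) (hne : C ≠ ∅) :
    fifStep r t C = insert (r (t+1)) (C.erase (victim r (t+1) C)) := by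
  unfold fifStep
  rw [if_neg h, if_neg hne]

lemma fifStep_card {t : ℕ} (C : Finset ℕ) : (fifStep r t C).card = C.card := by
  by_cases h1 : r (t+1) ∈ C
  · rw [fifStep_of_mem r h1]
  by_cases h2 : C = ∅
  · unfold fifStep; rw [if_neg h1, if_pos h2]
  · have hNE : C.Nonempty := Finset.nonempty_iff_ne_empty.mpr h2
    have hv := victim_mem r (t := t+1) hNE
    rw [fifStep_of_not_mem r h1 h2,
      Finset.card_insert_of_notMem (fun hc => h1 (Finset.mem_of_mem_erase hc)),
      Finset.card_erase_of_mem hv]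
    have : 1 ≤ C.card := Finset.card_pos.mpr hNE
    omega

lemma fifStep_subset {t : ℕ} {C D : Finset ℕ} (h : C ⊆ D) : fifStep r t C ⊆ fifStep r t D := by
  by_cases hC : r (t+1) ∈ C
  · rw [fifStep_of_mem r hC, fifStep_of_mem r (h hC)]; exact h
  by_cases hCe : C = ∅
  · have : fifStep r t C = ∅ := by unfold fifStep; rw [if_neg hC, if_pos hCe, hCe]
    rw [this]; exact Finset.empty_subset _
  rw [fifStep_of_not_mem r hC hCe]
  by_cases hD : r (t+1) ∈ D
  · rw [fifStep_of_mem r hD]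
    intro a ha
    rcases Finset.mem_insert.mp ha with h1 | h1
    · exact h1 ▸ hD
    · exact h (Finset.mem_of_mem_erase h1)
  · have hDe : D ≠ ∅ := fun he => hCe (Finset.subset_empty.mp (he ▸ h))
    rw [fifStep_of_not_mem r hD hDe]
    intro a ha
    rcases Finset.mem_insert.mp ha with h1 | h1
    · exact h1 ▸ Finset.mem_insert_self _ _
    · have haC : a ∈ C := Finset.mem_of_mem_erase h1
      refine Finset.mem_insert_of_mem (Finset.mem_erase.mpr ⟨?_, h haC⟩)
      intro hav
      have hNE : C.Nonempty := Finset.nonempty_iff_ne_empty.mpr hCe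
      have hveq := victim_eq r hNE h (hav ▸ haC)
      exact (Finset.mem_erase.mp h1).1 (hav.trans hveq.symm)

lemma fifCache_succ (C : Finset ℕ) (t : ℕ) :
    fifCache r C (t+1) = fifStep r t (fifCache r C t) := rfl

lemma fifCache_card (C : Finset ℕ) (t : ℕ) : (fifCache r C t).card = C.card := by
  induction t with
  | zero => rfl
  | succ t ih => rw [fifCache_succ, fifStep_card, ih]

lemma fifCache_subset {C D : Finset ℕ} (h : C ⊆ D) (t : ℕ) : fifCache r C t ⊆ fifCache r D t := by
  induction t with
  | zero => exact h
  | succ t ih => exact fifStep_subset r ih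

variable (C0 : ℕ → Finset ℕ)

lemma cache_mono (hnest : ∀ m, C0 m ⊆ C0 (m+1)) {m m' : ℕ} (h : m ≤ m') (t : ℕ) :
    fifCache r (C0 m) t ⊆ fifCache r (C0 m') t := by
  have hsub : C0 m ⊆ C0 m' := by
    induction m', h using Nat.le_induction with
    | base => exact subset_rfl
    | succ k hk ih => exact ih.trans (hnest k)
  exact fifCache_subset r hsub t

lemma cache_top (n : ℕ) (huniv : ∀ s, r s ∈ C0 n) (t : ℕ) : fifCache r (C0 n) t = C0 n := by
  induction t with
  | zero => rfl
  | succ t ih => rw [fifCache_succ, ih]; exact fifStep_of_mem r (huniv (t+1))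

lemma cache_nonempty (hcard : ∀ m, (C0 m).card = m) {m : ℕ} (hm : 1 ≤ m) (t : ℕ) :
    (fifCache r (C0 m) t).Nonempty := by
  apply Finset.card_pos.mp
  rw [fifCache_card, hcard]
  omega

lemma cache_ne_empty (hcard : ∀ m, (C0 m).card = m) {m : ℕ} (hm : 1 ≤ m) (t : ℕ) :
    fifCache r (C0 m) t ≠ ∅ :=
  (cache_nonempty r C0 hcard hm t).ne_empty

lemma pos_mem_cache (n : ℕ) (huniv : ∀ s, r s ∈ C0 n) (t : ℕ) :
    r (t+1) ∈ fifCache r (C0 (beladyPos r C0 t (r (t+1)))) t := by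
  have hne : {m | r (t+1) ∈ fifCache r (C0 m) t}.Nonempty := by
    refine ⟨n, ?_⟩
    show r (t+1) ∈ fifCache r (C0 n) t
    rw [cache_top r C0 n huniv]
    exact huniv (t+1)
  exact Nat.sInf_mem hne

lemma pos_not_mem {t m : ℕ} (h : m < beladyPos r C0 t (r (t+1))) :
    r (t+1) ∉ fifCache r (C0 m) t := by
  unfold beladyPos at h
  exact Nat.notMem_of_lt_sInf (s := {m | r (t+1) ∈ fifCache r (C0 m) t}) h

lemma pos_eq (hnest : ∀ m, C0 m ⊆ C0 (m+1)) {t v : ℕ} (hv : 1 ≤ v)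
    (h1 : r (t+1) ∈ fifCache r (C0 v) t) (h2 : r (t+1) ∉ fifCache r (C0 (v-1)) t) :
    beladyPos r C0 t (r (t+1)) = v := by
  unfold beladyPos
  refine le_antisymm (Nat.sInf_le h1) (le_csInf ⟨v, h1⟩ ?_)
  intro m hm
  by_contra hlt
  push_neg at hlt
  exact h2 (cache_mono r C0 hnest (show m ≤ v - 1 by omega) t hm)

lemma diff_singleton (hnest : ∀ m, C0 m ⊆ C0 (m+1)) (hcard : ∀ m, (C0 m).card = m)
    {m : ℕ} (hm : 1 ≤ m) (t : ℕ) :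
    ∃ x, fifCache r (C0 m) t \ fifCache r (C0 (m-1)) t = {x} := by
  have hsub := cache_mono r C0 hnest (show m - 1 ≤ m by omega) t
  have hc := Finset.card_sdiff_of_subset hsub
  rw [fifCache_card, fifCache_card, hcard, hcard] at hc
  have : (fifCache r (C0 m) t \ fifCache r (C0 (m-1)) t).card = 1 := by omega
  exact Finset.card_eq_one.mp this

end Aux

section Pair
variable (r : ℕ → ℕ)

lemma pairStep (s : ℕ) {A B : Finset ℕ} (hAB : A ⊆ B) (hA : A.Nonempty)
    (hr : r (s+1) ∉ B) {x : ℕ} (hd : B \ A = {x}) :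
    ∃ x', fifStep r s B \ fifStep r s A = {x'} ∧ x' ∈ B ∧
      fifKey r (s+1) x' ≤ fifKey r (s+1) x ∧
      (x' = x ∨ ∀ p ∈ A, fifKey r (s+1) p ≤ fifKey r (s+1) x') := by
  have hB : B.Nonempty := hA.mono hAB
  have hrA : r (s+1) ∉ A := fun h => hr (hAB h)
  have hAne : A ≠ ∅ := hA.ne_empty
  have hBne : B ≠ ∅ := hB.ne_empty
  have hdx : ∀ a, (a ∈ B ∧ a ∉ A) ↔ a = x := by
    intro a
    rw [← Finset.mem_sdiff, hd, Finset.mem_singleton]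
  have hxB : x ∈ B := ((hdx x).mpr rfl).1
  have hxA : x ∉ A := ((hdx x).mpr rfl).2
  have hstepB : fifStep r s B = insert (r (s+1)) (B.erase (victim r (s+1) B)) :=
    fifStep_of_not_mem r hr hBne
  have hstepA : fifStep r s A = insert (r (s+1)) (A.erase (victim r (s+1) A)) :=
    fifStep_of_not_mem r hrA hAne
  have hvAA : victim r (s+1) A ∈ A := victim_mem r hA
  have hvBB : victim r (s+1) B ∈ B := victim_mem r hB
  by_cases hcase : victim r (s+1) B = x
  · refine ⟨victim r (s+1) A, ?_, hAB hvAA, ?_, Or.inr (fun p hp => victim_max r hA hp)⟩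
    · rw [hstepB, hstepA, hcase]
      ext a
      simp only [Finset.mem_sdiff, Finset.mem_insert, Finset.mem_erase, Finset.mem_singleton]
      have h1 := hdx a
      have h2 : a ∈ A → a ∈ B := fun h => hAB h
      have h3 : victim r (s+1) A ∈ A := hvAA
      have h4 : r (s+1) ∉ A := hrA
      have h5 : r (s+1) ∉ B := hr
      have h6 : x ∉ A := hxA
      have h8 : victim r (s+1) A ≠ r (s+1) := fun he => hrA (he ▸ hvAA)
      have h9 : victim r (s+1) A ≠ x := fun he => hxA (he ▸ hvAA)
      constructor
      · rintro ⟨ha, hb⟩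
        by_contra hne
        tauto
      · intro ha
        subst ha
        tauto
    · rw [← hcase]
      exact victim_max r hB (hAB hvAA)
  · have hvBA : victim r (s+1) B ∈ A := by
      by_contra h
      exact hcase ((hdx (victim r (s+1) B)).mp ⟨hvBB, h⟩)
    have hveq : victim r (s+1) A = victim r (s+1) B := victim_eq r hA hAB hvBA
    refine ⟨x, ?_, hxB, le_refl _, Or.inl rfl⟩
    rw [hstepB, hstepA, hveq]
    ext a
    simp only [Finset.mem_sdiff, Finset.mem_insert, Finset.mem_erase, Finset.mem_singleton]
    have h1 := hdx a
    have h2 : a ∈ A → a ∈ B := fun h => hAB h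
    have h3 : victim r (s+1) B ∈ A := hvBA
    have h4 : r (s+1) ∉ A := hrA
    have h5 : r (s+1) ∉ B := hr
    have h6 : x ∉ A := hxA
    have h7 : x ≠ victim r (s+1) B := fun he => hcase he.symm
    have h8 : x ≠ r (s+1) := fun he => hr (he ▸ hxB)
    constructor
    · rintro ⟨ha, hb⟩
      grind
    · intro ha
      subst ha
      grind

end Pair

section Main
variable (r : ℕ → ℕ) (C0 : ℕ → Finset ℕ) (n : ℕ)

lemma maintain (hnest : ∀ m, C0 m ⊆ C0 (m+1)) (hcard : ∀ m, (C0 m).card = m)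
    (huniv : ∀ s, r s ∈ C0 n) {v H : ℕ} (hv : 2 ≤ v) (hvH : v < H) (s : ℕ) {x X : ℕ}
    (hdv : fifCache r (C0 v) s \ fifCache r (C0 (v-1)) s = {x})
    (hdH : fifCache r (C0 H) s \ fifCache r (C0 (H-1)) s = {X})
    (hkey : fifKey r s x < fifKey r s X)
    (hnv : beladyPos r C0 s (r (s+1)) ≠ v) :
    beladyPos r C0 s (r (s+1)) ≠ H ∧
    ∃ x' X', fifCache r (C0 v) (s+1) \ fifCache r (C0 (v-1)) (s+1) = {x'} ∧
      fifCache r (C0 H) (s+1) \ fifCache r (C0 (H-1)) (s+1) = {X'} ∧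
      fifKey r (s+1) x' < fifKey r (s+1) X' := by
  have hxmem : x ∈ fifCache r (C0 v) s ∧ x ∉ fifCache r (C0 (v-1)) s := by
    have hm : x ∈ fifCache r (C0 v) s \ fifCache r (C0 (v-1)) s := by
      rw [hdv]; exact Finset.mem_singleton_self x
    exact Finset.mem_sdiff.mp hm
  have hXmem : X ∈ fifCache r (C0 H) s ∧ X ∉ fifCache r (C0 (H-1)) s := by
    have hm : X ∈ fifCache r (C0 H) s \ fifCache r (C0 (H-1)) s := by
      rw [hdH]; exact Finset.mem_singleton_self X
    exact Finset.mem_sdiff.mp hm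
  have hqx : r (s+1) ≠ x := by
    intro he
    apply hnv
    exact pos_eq r C0 hnest (by omega) (by rw [he]; exact hxmem.1) (by rw [he]; exact hxmem.2)
  have hnH : beladyPos r C0 s (r (s+1)) ≠ H := by
    intro hH
    have hqH : r (s+1) ∈ fifCache r (C0 H) s := by
      have hm := pos_mem_cache r C0 n huniv s
      rwa [hH] at hm
    have hqH1 : r (s+1) ∉ fifCache r (C0 (H-1)) s :=
      pos_not_mem r C0 (by rw [hH]; omega)
    have hqXe : r (s+1) = X := by
      have hm : r (s+1) ∈ fifCache r (C0 H) s \ fifCache r (C0 (H-1)) s :=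
        Finset.mem_sdiff.mpr ⟨hqH, hqH1⟩
      rw [hdH] at hm
      exact Finset.mem_singleton.mp hm
    have h1 : nextReq r s X ≤ ((s+1 : ℕ) : ℕ∞) := nextReq_le r (by omega) hqXe
    have h2 : nextReq r s x ≤ nextReq r s X := by
      unfold fifKey at hkey
      rcases Prod.Lex.lt_iff.mp hkey with h | h
      · exact le_of_lt h
      · exact le_of_eq h.1
    obtain ⟨T, hT1, hT2, hT3⟩ := exists_req_of_nextReq_le r (le_trans h2 h1)
    have hTe : T = s + 1 := by omega
    exact hqx (hTe ▸ hT3)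
  refine ⟨hnH, ?_⟩
  have hqX : r (s+1) ≠ X := by
    intro he
    apply hnH
    exact pos_eq r C0 hnest (by omega) (by rw [he]; exact hXmem.1) (by rw [he]; exact hXmem.2)
  have hkey' : fifKey r (s+1) x < fifKey r (s+1) X := by
    rw [fifKey_shift r hqx, fifKey_shift r hqX]; exact hkey
  rcases lt_trichotomy (beladyPos r C0 s (r (s+1))) v with hcase | hcase | hcase
  · have hqmem : r (s+1) ∈ fifCache r (C0 (v-1)) s :=
      cache_mono r C0 hnest (show beladyPos r C0 s (r (s+1)) ≤ v - 1 by omega) s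
        (pos_mem_cache r C0 n huniv s)
    have e1 : ∀ m, v - 1 ≤ m → fifCache r (C0 m) (s+1) = fifCache r (C0 m) s := by
      intro m hm
      rw [fifCache_succ]
      exact fifStep_of_mem r (cache_mono r C0 hnest hm s hqmem)
    refine ⟨x, X, ?_, ?_, hkey'⟩
    · rw [e1 v (by omega), e1 (v-1) le_rfl]; exact hdv
    · rw [e1 H (by omega), e1 (H-1) (by omega)]; exact hdH
  · exact absurd hcase hnv
  · have hqnv : r (s+1) ∉ fifCache r (C0 v) s := pos_not_mem r C0 (by omega)
    obtain ⟨x', hdv', hx'B, hkle, _⟩ :=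
      pairStep r s (cache_mono r C0 hnest (show v - 1 ≤ v by omega) s)
        (cache_nonempty r C0 hcard (show 1 ≤ v - 1 by omega) s) hqnv hdv
    rcases lt_trichotomy (beladyPos r C0 s (r (s+1))) H with hcase2 | hcase2 | hcase2
    · have hqmem : r (s+1) ∈ fifCache r (C0 (H-1)) s :=
        cache_mono r C0 hnest (show beladyPos r C0 s (r (s+1)) ≤ H - 1 by omega) s
          (pos_mem_cache r C0 n huniv s)
      have e1 : fifCache r (C0 (H-1)) (s+1) = fifCache r (C0 (H-1)) s := by
        rw [fifCache_succ]; exact fifStep_of_mem r hqmem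
      have e2 : fifCache r (C0 H) (s+1) = fifCache r (C0 H) s := by
        rw [fifCache_succ]
        exact fifStep_of_mem r (cache_mono r C0 hnest (show H - 1 ≤ H by omega) s hqmem)
      exact ⟨x', X, by rw [fifCache_succ, fifCache_succ]; exact hdv',
        by rw [e1, e2]; exact hdH, lt_of_le_of_lt hkle hkey'⟩
    · exact absurd hcase2 hnH
    · have hqnH : r (s+1) ∉ fifCache r (C0 H) s := pos_not_mem r C0 (by omega)
      obtain ⟨X', hdH', hX'B, hkleX, hdisj⟩ :=
        pairStep r s (cache_mono r C0 hnest (show H - 1 ≤ H by omega) s)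
          (cache_nonempty r C0 hcard (show 1 ≤ H - 1 by omega) s) hqnH hdH
      refine ⟨x', X', by rw [fifCache_succ, fifCache_succ]; exact hdv',
        by rw [fifCache_succ, fifCache_succ]; exact hdH', ?_⟩
      rcases hdisj with hXX | hmax
      · rw [hXX]; exact lt_of_le_of_lt hkle hkey'
      · have hx'H : x' ∈ fifCache r (C0 (H-1)) s :=
          cache_mono r C0 hnest (show v ≤ H - 1 by omega) s hx'B
        refine lt_of_le_of_ne (hmax x' hx'H) (fun he => ?_)
        have hxeq : x' = X' := fifKey_inj r he
        have hx'mem : x' ∈ fifCache r (C0 v) (s+1) := by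
          have hm : x' ∈ fifCache r (C0 v) (s+1) \ fifCache r (C0 (v-1)) (s+1) := by
            rw [fifCache_succ, fifCache_succ, hdv']; exact Finset.mem_singleton_self x'
          exact (Finset.mem_sdiff.mp hm).1
        have hX'nmem : X' ∉ fifCache r (C0 (H-1)) (s+1) := by
          have hm : X' ∈ fifCache r (C0 H) (s+1) \ fifCache r (C0 (H-1)) (s+1) := by
            rw [fifCache_succ, fifCache_succ, hdH']; exact Finset.mem_singleton_self X'
          exact (Finset.mem_sdiff.mp hm).2
        exact hX'nmem (hxeq ▸ cache_mono r C0 hnest (show v ≤ H - 1 by omega) (s+1) hx'mem)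

lemma establish (hnest : ∀ m, C0 m ⊆ C0 (m+1)) (hcard : ∀ m, (C0 m).card = m)
    (huniv : ∀ s, r s ∈ C0 n) {v H : ℕ} (hv : 2 ≤ v) (hvH : v < H) (t1 : ℕ)
    (hH : beladyPos r C0 t1 (r (t1+1)) = H) :
    ∃ x X, fifCache r (C0 v) (t1+1) \ fifCache r (C0 (v-1)) (t1+1) = {x} ∧
      fifCache r (C0 H) (t1+1) \ fifCache r (C0 (H-1)) (t1+1) = {X} ∧
      fifKey r (t1+1) x < fifKey r (t1+1) X := by
  have hqH : r (t1+1) ∈ fifCache r (C0 H) t1 := by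
    have hm := pos_mem_cache r C0 n huniv t1
    rwa [hH] at hm
  have hqH1 : r (t1+1) ∉ fifCache r (C0 (H-1)) t1 :=
    pos_not_mem r C0 (by rw [hH]; omega)
  have hqv : r (t1+1) ∉ fifCache r (C0 v) t1 :=
    pos_not_mem r C0 (by rw [hH]; omega)
  obtain ⟨x, hdv⟩ := diff_singleton r C0 hnest hcard (show 1 ≤ v by omega) t1
  obtain ⟨x', hdv', hx'B, _, _⟩ :=
    pairStep r t1 (cache_mono r C0 hnest (show v - 1 ≤ v by omega) t1)
      (cache_nonempty r C0 hcard (show 1 ≤ v - 1 by omega) t1) hqv hdv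
  have eH : fifCache r (C0 H) (t1+1) = fifCache r (C0 H) t1 := by
    rw [fifCache_succ]; exact fifStep_of_mem r hqH
  have hA : (fifCache r (C0 (H-1)) t1).Nonempty :=
    cache_nonempty r C0 hcard (by omega) t1
  have eA : fifCache r (C0 (H-1)) (t1+1)
      = insert (r (t1+1)) ((fifCache r (C0 (H-1)) t1).erase
          (victim r (t1+1) (fifCache r (C0 (H-1)) t1))) := by
    rw [fifCache_succ]; exact fifStep_of_not_mem r hqH1 hA.ne_empty
  obtain ⟨X0, hdH0⟩ := diff_singleton r C0 hnest hcard (show 1 ≤ H by omega) t1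
  have hX0 : X0 = r (t1+1) := by
    have hmem : r (t1+1) ∈ fifCache r (C0 H) t1 \ fifCache r (C0 (H-1)) t1 :=
      Finset.mem_sdiff.mpr ⟨hqH, hqH1⟩
    rw [hdH0] at hmem
    exact (Finset.mem_singleton.mp hmem).symm
  subst hX0
  have hvAA : victim r (t1+1) (fifCache r (C0 (H-1)) t1) ∈ fifCache r (C0 (H-1)) t1 :=
    victim_mem r hA
  have hvAq : victim r (t1+1) (fifCache r (C0 (H-1)) t1) ≠ r (t1+1) :=
    fun he => hqH1 (he ▸ hvAA)
  have hdH' : fifCache r (C0 H) (t1+1) \ fifCache r (C0 (H-1)) (t1+1)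
      = {victim r (t1+1) (fifCache r (C0 (H-1)) t1)} := by
    rw [eH, eA]
    ext a
    simp only [Finset.mem_sdiff, Finset.mem_insert, Finset.mem_erase, Finset.mem_singleton]
    have h1 : (a ∈ fifCache r (C0 H) t1 ∧ a ∉ fifCache r (C0 (H-1)) t1) ↔ a = r (t1+1) := by
      rw [← Finset.mem_sdiff, hdH0, Finset.mem_singleton]
    have h2 : a ∈ fifCache r (C0 (H-1)) t1 → a ∈ fifCache r (C0 H) t1 :=
      fun h => cache_mono r C0 hnest (show H - 1 ≤ H by omega) t1 h
    have h3 := hvAA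
    have h4 := hvAq
    have h5 := hqH1
    constructor
    · rintro ⟨ha, hb⟩; tauto
    · intro ha; subst ha; grind
  refine ⟨x', victim r (t1+1) (fifCache r (C0 (H-1)) t1),
    by rw [fifCache_succ, fifCache_succ]; exact hdv', hdH', ?_⟩
  have hx'A : x' ∈ fifCache r (C0 (H-1)) t1 :=
    cache_mono r C0 hnest (show v ≤ H - 1 by omega) t1 hx'B
  refine lt_of_le_of_ne (victim_max r hA hx'A) (fun he => ?_)
  have hxeq : x' = victim r (t1+1) (fifCache r (C0 (H-1)) t1) := fifKey_inj r he
  have hx'mem : x' ∈ fifCache r (C0 v) (t1+1) := by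
    have hm : x' ∈ fifCache r (C0 v) (t1+1) \ fifCache r (C0 (v-1)) (t1+1) := by
      rw [fifCache_succ, fifCache_succ, hdv']; exact Finset.mem_singleton_self x'
    exact (Finset.mem_sdiff.mp hm).1
  have hvAn : victim r (t1+1) (fifCache r (C0 (H-1)) t1) ∉ fifCache r (C0 (H-1)) (t1+1) := by
    rw [eA]
    simp only [Finset.mem_insert, Finset.mem_erase]
    push_neg
    exact ⟨hvAq, fun hc => absurd rfl hc⟩
  exact hvAn (hxeq ▸ cache_mono r C0 hnest (show v ≤ H - 1 by omega) (t1+1) hx'mem)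

end Main


/-- **Position sequences satisfy the repeat property.**
Let `h t := beladyPos r C0 t (r (t+1))` be the position, in the Belady ranking just before
the request, of each requested page. Then between any two occurrences of the same
position value, every position in `{2, …, value - 1}` occurs at least once. -/
theorem position_sequence_repeat
    (r : ℕ → ℕ) (C0 : ℕ → Finset ℕ) (n : ℕ)
    (hnest : ∀ m, C0 m ⊆ C0 (m+1)) (hcard : ∀ m, (C0 m).card = m)
    (huniv : ∀ s, r s ∈ C0 n) :
    ∀ t1 t2, t1 < t2 →
      beladyPos r C0 t1 (r (t1+1)) = beladyPos r C0 t2 (r (t2+1)) →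
      ∀ v, 2 ≤ v → v < beladyPos r C0 t1 (r (t1+1)) →
        ∃ s, t1 < s ∧ s < t2 ∧ beladyPos r C0 s (r (s+1)) = v := by
  intro t1 t2 ht12 heq v hv2 hvH
  by_contra hcon
  push_neg at hcon
  obtain ⟨x0, X0, hdv0, hdH0, hk0⟩ :=
    establish r C0 n hnest hcard huniv hv2 hvH t1 rfl
  have hinv : ∀ k, t1 + 1 ≤ k → k ≤ t2 →
      ∃ x X, fifCache r (C0 v) k \ fifCache r (C0 (v-1)) k = {x} ∧
        fifCache r (C0 (beladyPos r C0 t1 (r (t1+1)))) k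
          \ fifCache r (C0 (beladyPos r C0 t1 (r (t1+1)) - 1)) k = {X} ∧
        fifKey r k x < fifKey r k X := by
    intro k hk1
    induction k, hk1 using Nat.le_induction with
    | base => exact fun _ => ⟨x0, X0, hdv0, hdH0, hk0⟩
    | succ k hk ih =>
      intro hk2
      obtain ⟨x, X, h1, h2, h3⟩ := ih (by omega)
      have hnv : beladyPos r C0 k (r (k+1)) ≠ v := hcon k (by omega) (by omega)
      exact (maintain r C0 n hnest hcard huniv hv2 hvH k h1 h2 h3 hnv).2
  obtain ⟨x, X, h1, h2, h3⟩ := hinv t2 (by omega) le_rfl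
  have hnv2 : beladyPos r C0 t2 (r (t2+1)) ≠ v := by omega
  exact (maintain r C0 n hnest hcard huniv hv2 hvH t2 h1 h2 h3 hnv2).1 heq.symm
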